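/- Let G be a topological group, Y a Hausdorff locally convex real topological vector space, φ : G → Y a function of class LUC¹, and X₁, X₂ one-parameter subgroups of G. Then for every g₀ ∈ G there is a neighborhood V₀ of g₀ such that for every neighborhood U of 0 in Y there exists δ > 0 with: for all g ∈ V₀ and all t with 0 < |t| < δ, the remainder φ(g·X₁(t)·X₂(t)) − φ(g) − t • ((D_{X₁}φ)(g) + (D_{X₂}φ)(g)) belongs to t • U. -/

import Mathlib

open Filter Topology Pointwise

/-- A one-parameter subgroup of a topological group `G`: a continuous homomorphism
from the additive group of reals into `G`. -/
structure OneParamSubgroup (G : Type*) [Group G] [TopologicalSpace G] where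
  toFun : ℝ → G
  continuous_toFun : Continuous toFun
  map_add : ∀ s t : ℝ, toFun (s + t) = toFun s * toFun t

/-- `X = X₁ + X₂` in the Trotter sense: `(X₁(t/n) X₂(t/n))^n → X(t)` uniformly on
compact subsets of `ℝ`. -/
def TrotterSum {G : Type*} [Group G] [TopologicalSpace G]
    (X X₁ X₂ : OneParamSubgroup G) : Prop :=
  ∀ K : Set ℝ, IsCompact K → ∀ W ∈ 𝓝 (1 : G), ∃ N : ℕ, ∀ n : ℕ, N ≤ n → ∀ t ∈ K,
    (X.toFun t)⁻¹ * (X₁.toFun (t / (n : ℝ)) * X₂.toFun (t / (n : ℝ))) ^ n ∈ W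

/-- `(D_X φ)(g)` exists and equals `z`. -/
def HasDirDerivAt {G Y : Type*} [Group G] [TopologicalSpace G]
    [AddCommGroup Y] [Module ℝ Y] [TopologicalSpace Y]
    (φ : G → Y) (X : OneParamSubgroup G) (g : G) (z : Y) : Prop :=
  Tendsto (fun t : ℝ => t⁻¹ • (φ (g * X.toFun t) - φ g)) (𝓝[≠] (0 : ℝ)) (𝓝 z)

/-- `φ : G → Y` is locally left uniformly continuous. -/
def LocallyLeftUC {G Y : Type*} [Group G] [TopologicalSpace G]
    [AddCommGroup Y] [TopologicalSpace Y] (φ : G → Y) : Prop :=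
  ∀ g₀ : G, ∃ V ∈ 𝓝 g₀, ∀ U ∈ 𝓝 (0 : Y), ∃ W ∈ 𝓝 (1 : G),
    ∀ x ∈ V, ∀ y ∈ V, x⁻¹ * y ∈ W → φ x - φ y ∈ U

/-- `φ` is of class LUC¹, with `D X g = (D_X φ)(g)`. -/
def IsLUC1 {G Y : Type*} [Group G] [TopologicalSpace G]
    [AddCommGroup Y] [Module ℝ Y] [TopologicalSpace Y]
    (φ : G → Y) (D : OneParamSubgroup G → G → Y) : Prop :=
  LocallyLeftUC φ ∧ (∀ X g, HasDirDerivAt φ X g (D X g)) ∧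
    ∀ X, LocallyLeftUC (D X)

/-!
The increment `φ(g X₁(t) X₂(t)) - φ(g)` splits into an `X₁`-step from `g` and an `X₂`-step
from `g X₁(t)`. Each step is a mean value estimate: by Hahn–Banach and the scalar mean value
theorem, the mean slope of a curve lies in every closed convex set containing its derivatives,
and local left uniform continuity of `D_{Xᵢ}φ` keeps the derivatives along both steps in a small
closed convex neighbourhood of `D_{Xᵢ}φ(g)`.
-/

open Set

namespace OneParamSubgroup

variable {G : Type*} [Group G] [TopologicalSpace G]

theorem map_zero (X : OneParamSubgroup G) : X.toFun 0 = 1 := by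
  simpa using X.map_add 0 0

theorem exists_pos_forall_abs_lt_mul_mem [IsTopologicalGroup G] (X₁ X₂ : OneParamSubgroup G)
    {W : Set G} (hW : W ∈ 𝓝 (1 : G)) :
    ∃ δ > (0 : ℝ), ∀ s s' : ℝ, |s| < δ → |s'| < δ → X₁.toFun s * X₂.toFun s' ∈ W := by
  have hcont : Continuous fun p : ℝ × ℝ => X₁.toFun p.1 * X₂.toFun p.2 :=
    (X₁.continuous_toFun.comp continuous_fst).mul (X₂.continuous_toFun.comp continuous_snd)
  have hW' : W ∈ 𝓝 (X₁.toFun 0 * X₂.toFun 0) := by rwa [map_zero, map_zero, mul_one]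
  obtain ⟨δ, hδ, hball⟩ := Metric.eventually_nhds_iff.1 (hcont.continuousAt (x := (0, 0)) hW')
  refine ⟨δ, hδ, fun s s' hs hs' => hball (y := (s, s')) ?_⟩
  rw [Prod.dist_eq, Real.dist_0_eq_abs, Real.dist_0_eq_abs]
  exact max_lt hs hs'

end OneParamSubgroup

theorem LocallyLeftUC.exists_nhds_forall_mul_sub_mem {G Y : Type*} [Group G] [TopologicalSpace G]
    [IsTopologicalGroup G] [AddCommGroup Y] [TopologicalSpace Y] {f : G → Y}
    (hf : LocallyLeftUC f) (g₀ : G) :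
    ∃ V ∈ 𝓝 g₀, ∀ U ∈ 𝓝 (0 : Y), ∃ W ∈ 𝓝 (1 : G), ∀ g ∈ V, ∀ h ∈ W, f (g * h) - f g ∈ U := by
  obtain ⟨V, hV, hVU⟩ := hf g₀
  have hmul : ∀ᶠ p in 𝓝 g₀ ×ˢ 𝓝 (1 : G), p.1 * p.2 ∈ V := by
    rw [← nhds_prod_eq]
    exact (continuous_mul.tendsto' (g₀, 1) g₀ (mul_one g₀)) hV
  obtain ⟨V₀, hV₀, W₀, hW₀, hV₀W₀⟩ := eventually_prod_iff.1 hmul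
  refine ⟨V₀, hV₀, fun U hU => ?_⟩
  obtain ⟨W₁, hW₁, hW₁U⟩ := hVU U hU
  refine ⟨W₀ ∩ W₁⁻¹, inter_mem hW₀ (inv_mem_nhds_one G hW₁), fun g hg h hh => ?_⟩
  refine hW₁U _ (hV₀W₀ hg hh.1) _ (by simpa using hV₀W₀ hg (mem_of_mem_nhds hW₀)) ?_
  simpa using hh.2

section MeanValue

variable {Y : Type*} [AddCommGroup Y] [Module ℝ Y] [TopologicalSpace Y]

/-- Differentiability of a curve in the weak topology (not in the distributional sense). -/
def HasWeakDerivAt (γ : ℝ → Y) (v : Y) (s : ℝ) : Prop :=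
  ∀ f : StrongDual ℝ Y, HasDerivAt (fun u => f (γ u)) (f v) s

variable [IsTopologicalAddGroup Y] [ContinuousSMul ℝ Y] [LocallyConvexSpace ℝ Y]
  {γ v : ℝ → Y} {C : Set Y} {a b : ℝ}

theorem Convex.sub_mem_smul_of_hasWeakDerivAt_of_lt (hC : Convex ℝ C) (hCc : IsClosed C)
    (hab : a < b) (hγ : ∀ s ∈ Icc a b, HasWeakDerivAt γ (v s) s) (hv : ∀ s ∈ Icc a b, v s ∈ C) :
    γ b - γ a ∈ (b - a) • C := by
  rw [mem_smul_set_iff_inv_smul_mem₀ (sub_pos.2 hab).ne']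
  by_contra hslope
  obtain ⟨f, u, hfC, hfslope⟩ := geometric_hahn_banach_closed_point hC hCc hslope
  obtain ⟨c, hc, hfc⟩ := exists_hasDerivAt_eq_slope (fun s => f (γ s)) (fun s => f (v s)) hab
    (fun s hs => (hγ s hs f).continuousAt.continuousWithinAt)
    (fun s hs => hγ s (Ioo_subset_Icc_self hs) f)
  have : f (v c) = f ((b - a)⁻¹ • (γ b - γ a)) := by
    rw [hfc, map_smul, map_sub, smul_eq_mul, div_eq_inv_mul]
  linarith [hfC _ (hv c (Ioo_subset_Icc_self hc))]

theorem Convex.sub_mem_smul_of_hasWeakDerivAt (hC : Convex ℝ C) (hCc : IsClosed C)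
    (hγ : ∀ s ∈ uIcc a b, HasWeakDerivAt γ (v s) s) (hv : ∀ s ∈ uIcc a b, v s ∈ C) :
    γ b - γ a ∈ (b - a) • C := by
  rcases lt_trichotomy a b with hab | rfl | hba
  · rw [uIcc_of_le hab.le] at hγ hv
    exact hC.sub_mem_smul_of_hasWeakDerivAt_of_lt hCc hab hγ hv
  · rw [sub_self, sub_self, zero_smul_set ⟨v a, hv a (by simp)⟩]
    exact Set.zero_mem_zero
  · rw [uIcc_of_ge hba.le] at hγ hv
    have := hC.sub_mem_smul_of_hasWeakDerivAt_of_lt hCc hba hγ hv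
    rwa [← neg_sub a b, neg_smul_set, Set.mem_neg, neg_sub]

end MeanValue

section DirectionalDerivative

variable {G Y : Type*} [Group G] [TopologicalSpace G]
  [AddCommGroup Y] [Module ℝ Y] [TopologicalSpace Y]
  {φ : G → Y} {X : OneParamSubgroup G} {a : G}

theorem HasDirDerivAt.hasWeakDerivAt {s : ℝ} {z : Y}
    (h : HasDirDerivAt φ X (a * X.toFun s) z) :
    HasWeakDerivAt (fun u => φ (a * X.toFun u)) z s := by
  intro f
  rw [hasDerivAt_iff_tendsto_slope_zero]
  refine ((f.continuous.tendsto z).comp h).congr fun t => ?_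
  simp only [Function.comp_apply, map_smul, map_sub, X.map_add, mul_assoc]

theorem sub_sub_smul_mem_smul_of_hasDirDerivAt [IsTopologicalAddGroup Y] [ContinuousSMul ℝ Y]
    [LocallyConvexSpace ℝ Y] {v : ℝ → Y} {w : Y} {t : ℝ} {C : Set Y}
    (hC : Convex ℝ C) (hCc : IsClosed C)
    (hφ : ∀ s ∈ uIcc 0 t, HasDirDerivAt φ X (a * X.toFun s) (v s))
    (hv : ∀ s ∈ uIcc 0 t, v s - w ∈ C) :
    φ (a * X.toFun t) - φ a - t • w ∈ t • C := by
  have hγ : ∀ s ∈ uIcc 0 t,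
      HasWeakDerivAt (fun u => φ (a * X.toFun u) - u • w) (v s - w) s := fun s hs f => by
    simpa only [map_sub, map_smul, smul_eq_mul, one_mul] using
      ((hφ s hs).hasWeakDerivAt f).fun_sub (hasDerivAt_mul_const (f w))
  simpa [X.map_zero, sub_right_comm] using hC.sub_mem_smul_of_hasWeakDerivAt hCc hγ hv

end DirectionalDerivative

theorem first_order_expansion_product_general
    {G Y : Type*} [Group G] [TopologicalSpace G] [IsTopologicalGroup G]
    [AddCommGroup Y] [Module ℝ Y] [TopologicalSpace Y] [IsTopologicalAddGroup Y]
    [ContinuousSMul ℝ Y] [LocallyConvexSpace ℝ Y]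
    (φ : G → Y) (D : OneParamSubgroup G → G → Y) (hφ : IsLUC1 φ D)
    (X₁ X₂ : OneParamSubgroup G) :
    ∀ g₀ : G, ∃ V₀ ∈ 𝓝 g₀, ∀ U ∈ 𝓝 (0 : Y), ∃ δ > (0 : ℝ),
      ∀ g ∈ V₀, ∀ t : ℝ, 0 < |t| → |t| < δ →
        φ (g * X₁.toFun t * X₂.toFun t) - φ g - t • (D X₁ g + D X₂ g) ∈ t • U := by
  obtain ⟨-, hD, hDLUC⟩ := hφ
  intro g₀
  obtain ⟨V₁, hV₁, hD₁⟩ := (hDLUC X₁).exists_nhds_forall_mul_sub_mem g₀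
  obtain ⟨V₂, hV₂, hD₂⟩ := (hDLUC X₂).exists_nhds_forall_mul_sub_mem g₀
  refine ⟨V₁ ∩ V₂, inter_mem hV₁ hV₂, fun U hU => ?_⟩
  obtain ⟨U₁, hU₁, hU₁U⟩ := exists_nhds_zero_half hU
  obtain ⟨C, ⟨hC, hCc, -, hCconv⟩, hCU₁⟩ := (nhds_hasBasis_absConvex_closed ℝ Y).mem_iff.1 hU₁
  obtain ⟨W₁, hW₁, hW₁C⟩ := hD₁ C hC
  obtain ⟨W₂, hW₂, hW₂C⟩ := hD₂ C hC
  obtain ⟨δ, hδ, hδW⟩ :=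
    OneParamSubgroup.exists_pos_forall_abs_lt_mul_mem X₁ X₂ (inter_mem hW₁ hW₂)
  refine ⟨δ, hδ, fun g hg t _ htδ => ?_⟩
  have hsmall : ∀ s ∈ uIcc 0 t, |s| < δ := fun s hs =>
    (by simpa using abs_sub_left_of_mem_uIcc hs : |s| ≤ |t|).trans_lt htδ
  have h₁ : φ (g * X₁.toFun t) - φ g - t • D X₁ g ∈ t • C :=
    sub_sub_smul_mem_smul_of_hasDirDerivAt hCconv hCc (fun s _ => hD X₁ _) fun s hs =>
      hW₁C g hg.1 _ (by simpa [X₂.map_zero] using (hδW s 0 (hsmall s hs) (by simpa)).1)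
  have h₂ : φ (g * X₁.toFun t * X₂.toFun t) - φ (g * X₁.toFun t) - t • D X₂ g ∈ t • C :=
    sub_sub_smul_mem_smul_of_hasDirDerivAt hCconv hCc (fun s _ => hD X₂ _) fun s hs => by
      simpa only [mul_assoc] using hW₂C g hg.2 _ (hδW t s htδ (hsmall s hs)).2
  obtain ⟨c₁, hc₁, hc₁eq⟩ := h₁
  obtain ⟨c₂, hc₂, hc₂eq⟩ := h₂
  refine ⟨c₂ + c₁, hU₁U _ (hCU₁ hc₂) _ (hCU₁ hc₁), ?_⟩
  simp only [smul_add, hc₁eq, hc₂eq]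
  abel

theorem first_order_expansion_product
    {G Y : Type*} [Group G] [TopologicalSpace G] [IsTopologicalGroup G]
    [AddCommGroup Y] [Module ℝ Y] [TopologicalSpace Y] [IsTopologicalAddGroup Y]
    [ContinuousSMul ℝ Y] [LocallyConvexSpace ℝ Y] [T2Space Y]
    (φ : G → Y) (D : OneParamSubgroup G → G → Y) (hφ : IsLUC1 φ D)
    (X₁ X₂ : OneParamSubgroup G) :
    ∀ g₀ : G, ∃ V₀ ∈ 𝓝 g₀, ∀ U ∈ 𝓝 (0 : Y), ∃ δ > (0 : ℝ),
      ∀ g ∈ V₀, ∀ t : ℝ, 0 < |t| → |t| < δ →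
        φ (g * X₁.toFun t * X₂.toFun t) - φ g - t • (D X₁ g + D X₂ g) ∈ t • U :=
  first_order_expansion_product_general φ D hφ X₁ X₂
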